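/- The function x ↦ h(4x−1) − h(2x−1) − h(x) tends to 0 as x → ∞. -/

import Mathlib

/-!
Write `x ∈ [m_n, m_{n+1}]` as the point with affine coordinate `t` in that piece, and let `y`, `z`
be the points with the same coordinate in the next two pieces. Since `h` interpolates `F_n`
affinely, `h z = h y + h x` by the Fibonacci recurrence. Since `m_{n+1} = 2 m_n + (-1)^n`, we
have `y = 2x + d` and `z = 4x + d` with `|d| ≤ 1`. Finally, on `[m_N, ∞)` the function `h` is
Lipschitz with constant `6 (φ/2)^N`, as its slope on the `k`-th piece is
`F_{k-1} / (m_{k+1} - m_k) ≤ 6 (φ/2)^k`. Hence `h(4x-1) - h(2x-1) - h(x) = O((φ/2)^N)`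
for `x ≥ m_N`.
-/

open Filter Set AffineMap
open scoped goldenRatio

noncomputable def jacobsthal (n : ℕ) : ℝ := (2 ^ n - (-1) ^ n) / 3

lemma jacobsthal_succ_sub (n : ℕ) :
    jacobsthal (n + 1) - jacobsthal n = (2 ^ n + 2 * (-1) ^ n) / 3 := by
  unfold jacobsthal; ring

lemma pow_div_six_le_jacobsthal_succ_sub {n : ℕ} (hn : 2 ≤ n) :
    2 ^ n / 6 ≤ jacobsthal (n + 1) - jacobsthal n := by
  have h4 := pow_le_pow_right₀ (by norm_num : (1 : ℝ) ≤ 2) hn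
  norm_num at h4
  rw [jacobsthal_succ_sub]
  rcases neg_one_pow_eq_or ℝ n with he | he <;> rw [he] <;> linarith

lemma jacobsthal_succ_sub_pos {n : ℕ} (hn : 2 ≤ n) : 0 < jacobsthal (n + 1) - jacobsthal n :=
  lt_of_lt_of_le (by positivity) (pow_div_six_le_jacobsthal_succ_sub hn)

lemma image_lineMap_jacobsthal {n : ℕ} (hn : 2 ≤ n) :
    lineMap (jacobsthal n) (jacobsthal (n + 1)) '' Icc (0 : ℝ) 1
      = Icc (jacobsthal n) (jacobsthal (n + 1)) := by
  rw [← segment_eq_image_lineMap ℝ, segment_eq_Icc (sub_pos.mp (jacobsthal_succ_sub_pos hn)).le]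

lemma one_le_jacobsthal {n : ℕ} (hn : 2 ≤ n) : 1 ≤ jacobsthal n := by
  have h4 := pow_le_pow_right₀ (by norm_num : (1 : ℝ) ≤ 2) hn
  norm_num at h4
  unfold jacobsthal
  rcases neg_one_pow_eq_or ℝ n with he | he <;> rw [he] <;> linarith

lemma tendsto_jacobsthal_atTop : Tendsto jacobsthal atTop atTop := by
  refine tendsto_atTop_mono (fun n => ?_)
    ((tendsto_atTop_add_const_right _ (-1)
      (tendsto_pow_atTop_atTop_of_one_lt one_lt_two)).atTop_div_const (by norm_num : (0 : ℝ) < 3))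
  unfold jacobsthal
  rcases neg_one_pow_eq_or ℝ n with he | he <;> rw [he] <;> linarith

lemma lineMap_jacobsthal_succ_sub_two_mul (n : ℕ) (t : ℝ) :
    lineMap (jacobsthal (n + 1)) (jacobsthal (n + 2)) t
      - 2 * lineMap (jacobsthal n) (jacobsthal (n + 1)) t = (-1) ^ n * (1 - 2 * t) := by
  simp only [lineMap_apply_ring', jacobsthal]; ring

lemma exists_mem_Icc_of_tendsto_atTop {α : Type*} [LinearOrder α] [NoMaxOrder α] {u : ℕ → α}
    (hu : Tendsto u atTop atTop) {N : ℕ} {x : α} (hx : u N ≤ x) :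
    ∃ n ≥ N, x ∈ Icc (u n) (u (n + 1)) := by
  by_contra! hnot
  have hle : ∀ k ≥ N, u k ≤ x := fun k hk => by
    induction k, hk using Nat.le_induction with
    | base => exact hx
    | succ k hk ih => exact le_of_lt (lt_of_not_ge fun h' => hnot k hk ⟨ih, h'⟩)
  obtain ⟨k, hk, hxk⟩ := ((eventually_ge_atTop N).and (hu.eventually_gt_atTop x)).exists
  exact (hle k hk).not_gt hxk

lemma dist_le_of_forall_Icc {E : Type*} [PseudoMetricSpace E] {f : ℝ → E} {u : ℕ → ℝ}
    (hu : Tendsto u atTop atTop) {σ : ℝ} {N : ℕ}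
    (hpiece : ∀ k ≥ N, ∀ a ∈ Icc (u k) (u (k + 1)), ∀ b ∈ Icc (u k) (u (k + 1)),
      dist (f a) (f b) ≤ σ * dist a b)
    {a b : ℝ} (ha : u N ≤ a) (hb : u N ≤ b) : dist (f a) (f b) ≤ σ * dist a b := by
  have below : ∀ k ≥ N, ∀ a ∈ Icc (u N) (u k), ∀ b ∈ Icc a (u k),
      dist (f a) (f b) ≤ σ * dist a b := by
    intro k hk
    induction k, hk using Nat.le_induction with
    | base =>
      intro a ha b hb
      obtain rfl : a = b := by linarith [ha.2, hb.1, hb.2, ha.1]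
      simp
    | succ k hk ih =>
      intro a ha b hb
      rcases le_or_gt b (u k) with hbk | hkb
      · exact ih a ⟨ha.1, hb.1.trans hbk⟩ b ⟨hb.1, hbk⟩
      rcases le_or_gt (u k) a with hka | hak
      · exact hpiece k hk a ⟨hka, ha.2⟩ b ⟨hka.trans hb.1, hb.2⟩
      calc dist (f a) (f b) ≤ dist (f a) (f (u k)) + dist (f (u k)) (f b) := dist_triangle _ _ _
        _ ≤ σ * dist a (u k) + σ * dist (u k) b :=
          add_le_add (ih a ⟨ha.1, hak.le⟩ (u k) ⟨hak.le, le_rfl⟩)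
            (hpiece k hk (u k) ⟨le_rfl, hkb.le.trans hb.2⟩ b ⟨hkb.le, hb.2⟩)
        _ = σ * dist a b := by
          rw [Real.dist_eq, Real.dist_eq, Real.dist_eq, abs_of_neg (by linarith),
            abs_of_neg (by linarith), abs_of_nonpos (by linarith [hb.1])]
          ring
  wlog hab : a ≤ b generalizing a b
  · rw [dist_comm, dist_comm a]
    exact this hb ha (le_of_not_ge hab)
  obtain ⟨k, hk, hbk⟩ := ((eventually_ge_atTop N).and (hu.eventually_ge_atTop b)).exists
  exact below k hk a ⟨ha, hab.trans hbk⟩ b ⟨hab, hbk⟩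

lemma fib_succ_le_goldenRatio_pow (n : ℕ) : (Nat.fib (n + 1) : ℝ) ≤ φ ^ n := by
  have h := Real.goldenRatio_mul_fib_succ_add_fib n
  rw [pow_succ'] at h
  exact le_of_mul_le_mul_left (by linarith [(Nat.fib n).cast_nonneg (α := ℝ)])
    Real.goldenRatio_pos

def IsFibInterpolant (h : ℝ → ℝ) : Prop :=
  ∀ n : ℕ, 2 ≤ n → ∀ x ∈ Icc (jacobsthal n) (jacobsthal (n + 1)),
    h x = (Nat.fib n : ℝ) +
      ((Nat.fib (n + 1) : ℝ) - (Nat.fib n : ℝ)) * (x - jacobsthal n) /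
        (jacobsthal (n + 1) - jacobsthal n)

namespace IsFibInterpolant

variable {h : ℝ → ℝ}

lemma apply_lineMap (hh : IsFibInterpolant h) {n : ℕ} (hn : 2 ≤ n) {t : ℝ} (ht : t ∈ Icc 0 1) :
    h (lineMap (jacobsthal n) (jacobsthal (n + 1)) t)
      = lineMap (Nat.fib n : ℝ) (Nat.fib (n + 1)) t := by
  have hgap := jacobsthal_succ_sub_pos hn
  rw [hh n hn _ (image_lineMap_jacobsthal hn ▸ mem_image_of_mem _ ht)]
  simp only [lineMap_apply_ring']
  field_simp
  ring

lemma apply_lineMap_add_two (hh : IsFibInterpolant h) {n : ℕ} (hn : 2 ≤ n) {t : ℝ}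
    (ht : t ∈ Icc 0 1) :
    h (lineMap (jacobsthal (n + 2)) (jacobsthal (n + 3)) t)
      = h (lineMap (jacobsthal (n + 1)) (jacobsthal (n + 2)) t)
        + h (lineMap (jacobsthal n) (jacobsthal (n + 1)) t) := by
  rw [hh.apply_lineMap (by omega) ht, hh.apply_lineMap (by omega) ht, hh.apply_lineMap hn ht]
  simp only [lineMap_apply_ring', Nat.fib_add_two, Nat.cast_add]
  ring

lemma dist_apply_le_of_mem_Icc (hh : IsFibInterpolant h) {k : ℕ} (hk : 2 ≤ k) {a b : ℝ}
    (ha : a ∈ Icc (jacobsthal k) (jacobsthal (k + 1)))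
    (hb : b ∈ Icc (jacobsthal k) (jacobsthal (k + 1))) :
    dist (h a) (h b) ≤ 6 * (φ / 2) ^ k * dist a b := by
  have hgap_pos := jacobsthal_succ_sub_pos hk
  have hfib : (0 : ℝ) ≤ Nat.fib (k + 1) - Nat.fib k := by
    rw [sub_nonneg]; exact_mod_cast Nat.fib_mono k.le_succ
  have hslope : ((Nat.fib (k + 1) : ℝ) - Nat.fib k) / (jacobsthal (k + 1) - jacobsthal k)
      ≤ 6 * (φ / 2) ^ k := by
    rw [div_le_iff₀ hgap_pos, div_pow]
    calc ((Nat.fib (k + 1) : ℝ) - Nat.fib k) ≤ φ ^ k := by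
          linarith [fib_succ_le_goldenRatio_pow k, (Nat.fib k).cast_nonneg (α := ℝ)]
      _ = 6 * (φ ^ k / 2 ^ k) * (2 ^ k / 6) := by field_simp
      _ ≤ 6 * (φ ^ k / 2 ^ k) * (jacobsthal (k + 1) - jacobsthal k) := by
        gcongr; exact pow_div_six_le_jacobsthal_succ_sub hk
  have hdiff : h a - h b = ((Nat.fib (k + 1) : ℝ) - Nat.fib k) /
      (jacobsthal (k + 1) - jacobsthal k) * (a - b) := by
    rw [hh k hk a ha, hh k hk b hb]
    ring
  rw [Real.dist_eq, Real.dist_eq, hdiff, abs_mul, abs_of_nonneg (div_nonneg hfib hgap_pos.le)]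
  gcongr

lemma dist_apply_le (hh : IsFibInterpolant h) {N : ℕ} (hN : 2 ≤ N) {a b : ℝ}
    (ha : jacobsthal N ≤ a) (hb : jacobsthal N ≤ b) :
    dist (h a) (h b) ≤ 6 * (φ / 2) ^ N * dist a b := by
  refine dist_le_of_forall_Icc tendsto_jacobsthal_atTop (fun k hk a ha b hb => ?_) ha hb
  calc dist (h a) (h b) ≤ 6 * (φ / 2) ^ k * dist a b :=
        hh.dist_apply_le_of_mem_Icc (hN.trans hk) ha hb
    _ ≤ 6 * (φ / 2) ^ N * dist a b := by
      have hpow : (φ / 2) ^ k ≤ (φ / 2) ^ N :=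
        pow_le_pow_of_le_one (by positivity) (by linarith [Real.goldenRatio_lt_two]) hk
      gcongr

lemma abs_apply_four_mul_sub_one_sub_le (hh : IsFibInterpolant h) {N : ℕ} (hN : 2 ≤ N) {x : ℝ}
    (hx : jacobsthal N ≤ x) :
    |h (4 * x - 1) - h (2 * x - 1) - h x| ≤ 24 * (φ / 2) ^ N := by
  obtain ⟨n, hnN, hxn⟩ := exists_mem_Icc_of_tendsto_atTop tendsto_jacobsthal_atTop hx
  have hn : 2 ≤ n := hN.trans hnN
  rw [← image_lineMap_jacobsthal hn] at hxn
  obtain ⟨t, ht, rfl⟩ := hxn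
  set x := lineMap (jacobsthal n) (jacobsthal (n + 1)) t
  set y := lineMap (jacobsthal (n + 1)) (jacobsthal (n + 2)) t
  set z := lineMap (jacobsthal (n + 2)) (jacobsthal (n + 3)) t
  -- `y` and `z` are the points of the next two pieces with the same coordinate `t` as `x`
  set d := (-1 : ℝ) ^ n * (1 - 2 * t)
  have hd : -1 ≤ d ∧ d ≤ 1 := by
    rw [← abs_le, abs_mul, abs_neg_one_pow, one_mul, abs_le]
    constructor <;> linarith [ht.1, ht.2]
  have hy : y = 2 * x + d := by
    linear_combination lineMap_jacobsthal_succ_sub_two_mul n t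
  have hz : z = 4 * x + d := by
    linear_combination lineMap_jacobsthal_succ_sub_two_mul (n + 1) t + 2 * hy
  have hx1 : 1 ≤ x := (one_le_jacobsthal hN).trans hx
  have hdist (u v : ℝ) (hu : jacobsthal N ≤ u) (hv : jacobsthal N ≤ v) (huv : |u - v| ≤ 2) :
      |h u - h v| ≤ 12 * (φ / 2) ^ N := by
    calc |h u - h v| ≤ 6 * (φ / 2) ^ N * |u - v| := by
          simpa only [Real.dist_eq] using hh.dist_apply_le hN hu hv
      _ ≤ 6 * (φ / 2) ^ N * 2 := by gcongr
      _ = 12 * (φ / 2) ^ N := by ring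
  calc |h (4 * x - 1) - h (2 * x - 1) - h x|
      = |(h (4 * x - 1) - h z) - (h (2 * x - 1) - h y)| := by
        rw [show h z = h y + h x from hh.apply_lineMap_add_two hn ht]; ring_nf
    _ ≤ |h (4 * x - 1) - h z| + |h (2 * x - 1) - h y| := abs_sub _ _
    _ ≤ 12 * (φ / 2) ^ N + 12 * (φ / 2) ^ N := by
      gcongr
      · exact hdist _ _ (by linarith) (by linarith) (by rw [hz, abs_le]; constructor <;> linarith)
      · exact hdist _ _ (by linarith) (by linarith) (by rw [hy, abs_le]; constructor <;> linarith)
    _ = 24 * (φ / 2) ^ N := by ring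

end IsFibInterpolant

theorem tendsto_h_diff_minus_general
    (M : ℕ → ℝ) (hM : ∀ n : ℕ, M n = (2 ^ n - (-1) ^ n) / 3)
    (h : ℝ → ℝ)
    (hlin : ∀ n : ℕ, 2 ≤ n → ∀ x ∈ Set.Icc (M n) (M (n + 1)),
      h x = (Nat.fib n : ℝ) +
        ((Nat.fib (n + 1) : ℝ) - (Nat.fib n : ℝ)) * (x - M n) / (M (n + 1) - M n)) :
    Filter.Tendsto (fun x : ℝ => h (4 * x - 1) - h (2 * x - 1) - h x)
      Filter.atTop (nhds 0) := by
  obtain rfl : M = jacobsthal := funext hM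
  have hσ : Tendsto (fun N : ℕ => 24 * (φ / 2) ^ N) atTop (nhds 0) := by
    simpa using (tendsto_pow_atTop_nhds_zero_of_lt_one (by positivity)
      (by linarith [Real.goldenRatio_lt_two] : φ / 2 < 1)).const_mul 24
  rw [Metric.tendsto_atTop]
  intro ε hε
  obtain ⟨N, hN, hNε⟩ := ((eventually_ge_atTop 2).and (hσ.eventually (gt_mem_nhds hε))).exists
  exact ⟨jacobsthal N, fun x hx => by
    simpa [Real.dist_eq] using
      (IsFibInterpolant.abs_apply_four_mul_sub_one_sub_le hlin hN hx).trans_lt hNε⟩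

/-- `h(4x-1) - h(2x-1) - h(x) → 0` as `x → ∞`. -/
theorem tendsto_h_diff_minus
    (M : ℕ → ℝ) (hM : ∀ n : ℕ, M n = (2 ^ n - (-1) ^ n) / 3)
    (h : ℝ → ℝ)
    (h01 : ∀ x ∈ Set.Icc (0 : ℝ) 1, h x = x)
    (hlin : ∀ n : ℕ, 2 ≤ n → ∀ x ∈ Set.Icc (M n) (M (n + 1)),
      h x = (Nat.fib n : ℝ) +
        ((Nat.fib (n + 1) : ℝ) - (Nat.fib n : ℝ)) * (x - M n) / (M (n + 1) - M n)) :
    Filter.Tendsto (fun x : ℝ => h (4 * x - 1) - h (2 * x - 1) - h x)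
      Filter.atTop (nhds 0) :=
  tendsto_h_diff_minus_general M hM h hlin
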